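/- Let O be uniformly distributed over {0,1}^n, let E be a vector of n independent Bernoulli(p) bits with 0 ≤ p ≤ 1/2, independent of O, and let Y = O ⊕ E. Then for every realization y of Y and every integer t ≥ 0, max_{o ∈ {0,1}^n} Pr( d_H(O, o) ≤ t | Y = y ) = Σ_{i ≤ t} C(n, i)·p^i·(1−p)^{n−i}; consequently E_y [ max_{o} Pr( d_H(O, o) ≤ t | Y = y ) ] = Σ_{i ≤ t} C(n, i)·p^i·(1−p)^{n−i}. -/

import Mathlib

open Finset
open scoped Classical BigOperators

/-- Probability of an event over a finite sample space with mass function `P`. -/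
noncomputable def pr {Ω : Type*} [Fintype Ω] (P : Ω → ℝ) (E : Ω → Prop) : ℝ :=
  ∑ ω, if E ω then P ω else 0

/-- Conditional probability `Pr(A | B)`. -/
noncomputable def condPr {Ω : Type*} [Fintype Ω] (P : Ω → ℝ) (A B : Ω → Prop) : ℝ :=
  pr P (fun ω => A ω ∧ B ω) / pr P B

/-- Hamming weight of a binary string. -/
def wt {n : ℕ} (e : Fin n → Bool) : ℕ := hammingDist e (fun _ => false)

/- ### Auxiliary lemmas -/

lemma wt_le {n : ℕ} (e : Fin n → Bool) : wt e ≤ n := by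
  simpa [wt] using (hammingDist_le_card_fintype (x := e) (y := fun _ => false))

lemma wt_eq_card {n : ℕ} (e : Fin n → Bool) :
    wt e = (univ.filter fun i => e i = true).card := by
  unfold wt hammingDist
  congr 1
  apply Finset.filter_congr
  intro i _
  cases he : e i <;> simp [he]

lemma card_wt_eq {n : ℕ} (i : ℕ) :
    ((univ : Finset (Fin n → Bool)).filter fun e => wt e = i).card = n.choose i := by
  have h : ((univ : Finset (Fin n → Bool)).filter fun e => wt e = i).card
      = (Finset.powersetCard i (univ : Finset (Fin n))).card := by
    refine Finset.card_nbij' (fun e => univ.filter fun j => e j = true)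
      (fun s => fun j => decide (j ∈ s)) ?_ ?_ ?_ ?_
    · intro e he
      simp only [Finset.mem_coe, Finset.mem_filter, Finset.mem_univ, true_and] at he
      simp [Finset.mem_powersetCard, ← wt_eq_card, he]
    · intro s hs
      simp only [Finset.mem_coe, Finset.mem_powersetCard] at hs
      simp only [Finset.mem_coe, Finset.mem_filter, Finset.mem_univ, true_and]
      rw [wt_eq_card, ← hs.2]
      congr 1
      ext j
      simp
    · intro e _
      funext j
      simp
    · intro s _
      ext j
      simp
  rw [h, Finset.card_powersetCard]
  simp

lemma ham_xor {n : ℕ} (e c : Fin n → Bool) :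
    hammingDist e c = wt (fun i => xor (e i) (c i)) := by
  unfold wt hammingDist
  congr 1
  apply Finset.filter_congr
  intro i _
  cases he : e i <;> cases hc : c i <;> simp [he, hc]

lemma sum_wt_le {n : ℕ} (p : ℝ) (t : ℕ) :
    ∑ e ∈ (univ : Finset (Fin n → Bool)).filter (fun e => wt e ≤ t),
      p ^ wt e * (1 - p) ^ (n - wt e)
    = ∑ i ∈ Finset.range (t + 1), (n.choose i : ℝ) * p ^ i * (1 - p) ^ (n - i) := by
  have h := Finset.sum_fiberwise_eq_sum_filter' (univ : Finset (Fin n → Bool))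
    (Finset.range (t + 1)) wt (fun i => p ^ i * (1 - p) ^ (n - i))
  simp only [Finset.mem_range, Nat.lt_succ_iff] at h
  rw [← h]
  refine Finset.sum_congr rfl fun i _ => ?_
  rw [Finset.sum_const, card_wt_eq]
  ring

lemma sum_wt_total {n : ℕ} (p : ℝ) :
    ∑ e : Fin n → Bool, p ^ wt e * (1 - p) ^ (n - wt e) = 1 := by
  have h1 : (univ : Finset (Fin n → Bool)) = univ.filter (fun e => wt e ≤ n) :=
    (Finset.filter_true_of_mem (fun e _ => wt_le e)).symm
  rw [h1, sum_wt_le]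
  have h2 := add_pow p (1 - p) n
  simp only [add_sub_cancel, one_pow] at h2
  have h3 : ∑ i ∈ Finset.range (n+1), (n.choose i : ℝ) * p ^ i * (1-p) ^ (n-i)
      = ∑ m ∈ Finset.range (n+1), p ^ m * (1-p) ^ (n-m) * (n.choose m : ℝ) :=
    Finset.sum_congr rfl fun i _ => by ring
  rw [h3, ← h2]

lemma card_ball {n : ℕ} (t : ℕ) (c : Fin n → Bool) :
    ((univ : Finset (Fin n → Bool)).filter fun e => hammingDist e c ≤ t).card
    = ((univ : Finset (Fin n → Bool)).filter fun e => wt e ≤ t).card := by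
  refine Finset.card_nbij' (fun e => fun i => xor (e i) (c i))
    (fun e => fun i => xor (e i) (c i)) ?_ ?_ ?_ ?_
  · intro e he
    simp only [Finset.mem_coe, Finset.mem_filter, Finset.mem_univ, true_and] at he ⊢
    rwa [← ham_xor]
  · intro e he
    simp only [Finset.mem_coe, Finset.mem_filter, Finset.mem_univ, true_and] at he ⊢
    have : hammingDist (fun i => xor (e i) (c i)) c = wt e := by
      rw [ham_xor]
      congr 1
      funext i
      cases e i <;> cases c i <;> rfl
    rwa [this]
  · intro e _
    funext i
    simp [Bool.xor_assoc]
  · intro e _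
    funext i
    simp [Bool.xor_assoc]

lemma q_antitone {p : ℝ} (hp0 : 0 ≤ p) (hp : p ≤ 1 / 2) {n a b : ℕ}
    (hab : a ≤ b) (hbn : b ≤ n) :
    p ^ b * (1 - p) ^ (n - b) ≤ p ^ a * (1 - p) ^ (n - a) := by
  have hp1 : p ≤ 1 - p := by linarith
  have h1p : (0:ℝ) ≤ 1 - p := by linarith
  have e1 : p ^ b = p ^ a * p ^ (b - a) := by
    rw [← pow_add]; congr 1; omega
  have e2 : (1 - p) ^ (n - a) = (1 - p) ^ (b - a) * (1 - p) ^ (n - b) := by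
    rw [← pow_add]; congr 1; omega
  rw [e1, e2]
  have h3 : p ^ (b - a) ≤ (1 - p) ^ (b - a) := pow_le_pow_left₀ hp0 hp1 _
  have h4 : (0:ℝ) ≤ p ^ a := pow_nonneg hp0 _
  have h5 : (0:ℝ) ≤ (1 - p) ^ (n - b) := pow_nonneg h1p _
  calc p ^ a * p ^ (b - a) * (1 - p) ^ (n - b)
      ≤ p ^ a * (1 - p) ^ (b - a) * (1 - p) ^ (n - b) := by
        apply mul_le_mul_of_nonneg_right _ h5
        exact mul_le_mul_of_nonneg_left h3 h4
    _ = p ^ a * ((1 - p) ^ (b - a) * (1 - p) ^ (n - b)) := by ring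

lemma ball_le {n : ℕ} {p : ℝ} (hp0 : 0 ≤ p) (hp : p ≤ 1 / 2) (t : ℕ) (c : Fin n → Bool) :
    ∑ e ∈ (univ : Finset (Fin n → Bool)).filter (fun e => hammingDist e c ≤ t),
      p ^ wt e * (1 - p) ^ (n - wt e)
    ≤ ∑ e ∈ (univ : Finset (Fin n → Bool)).filter (fun e => wt e ≤ t),
      p ^ wt e * (1 - p) ^ (n - wt e) := by
  classical
  set q : (Fin n → Bool) → ℝ := fun e => p ^ wt e * (1 - p) ^ (n - wt e) with hq
  set B := (univ : Finset (Fin n → Bool)).filter (fun e => hammingDist e c ≤ t) with hB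
  set B₀ := (univ : Finset (Fin n → Bool)).filter (fun e => wt e ≤ t) with hB0
  set m := min t n with hm
  set θ : ℝ := p ^ m * (1 - p) ^ (n - m) with hθ
  have hθ₁ : ∀ e : Fin n → Bool, wt e ≤ t → θ ≤ q e := by
    intro e he
    exact q_antitone hp0 hp (le_min he (wt_le e)) (min_le_right _ _)
  have hθ₂ : ∀ e : Fin n → Bool, ¬ wt e ≤ t → q e ≤ θ := by
    intro e he
    push_neg at he
    have hmt : m ≤ wt e := le_trans (min_le_left _ _) (le_of_lt he)
    exact q_antitone hp0 hp hmt (wt_le e)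
  have hcard : B.card = B₀.card := card_ball t c
  have hcd : (B \ B₀).card = (B₀ \ B).card := by
    have h1 := Finset.card_sdiff_add_card_inter B B₀
    have h2 := Finset.card_sdiff_add_card_inter B₀ B
    rw [Finset.inter_comm] at h2
    omega
  have hup : ∑ e ∈ B \ B₀, q e ≤ (B \ B₀).card • θ := by
    apply Finset.sum_le_card_nsmul
    intro e he
    exact hθ₂ e (by simpa [hB0] using (Finset.mem_sdiff.1 he).2)
  have hlo : (B₀ \ B).card • θ ≤ ∑ e ∈ B₀ \ B, q e := by
    apply Finset.card_nsmul_le_sum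
    intro e he
    exact hθ₁ e (by simpa [hB0] using (Finset.mem_sdiff.1 he).1)
  have hsplit1 : ∑ e ∈ B, q e = ∑ e ∈ B ∩ B₀, q e + ∑ e ∈ B \ B₀, q e :=
    (Finset.sum_inter_add_sum_sdiff B B₀ q).symm
  have hsplit2 : ∑ e ∈ B₀, q e = ∑ e ∈ B₀ ∩ B, q e + ∑ e ∈ B₀ \ B, q e :=
    (Finset.sum_inter_add_sum_sdiff B₀ B q).symm
  rw [Finset.inter_comm] at hsplit2
  rw [hsplit1, hsplit2]
  have h6 := hcd ▸ hup
  have hle : ∑ e ∈ B \ B₀, q e ≤ ∑ e ∈ B₀ \ B, q e := le_trans h6 hlo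
  linarith

lemma xor_eq_iff {n : ℕ} (o e y : Fin n → Bool) :
    ((fun i => xor (o i) (e i)) = y) ↔ o = fun i => xor (y i) (e i) := by
  constructor
  · intro h
    funext i
    rw [← congrFun h i]
    simp [Bool.xor_assoc]
  · intro h
    subst h
    funext i
    simp [Bool.xor_assoc]

lemma ham_shift {n : ℕ} (y e o₀ : Fin n → Bool) :
    hammingDist (fun i => xor (y i) (e i)) o₀
    = hammingDist e (fun i => xor (y i) (o₀ i)) := by
  unfold hammingDist
  congr 1
  apply Finset.filter_congr
  intro i _
  cases hy : y i <;> cases he : e i <;> cases ho : o₀ i <;> simp [hy, he, ho]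

lemma pr_Y {n : ℕ} (p : ℝ) (y : Fin n → Bool) :
    pr (fun ω : (Fin n → Bool) × (Fin n → Bool) =>
          (1 / 2 ^ n : ℝ) * (p ^ wt ω.2 * (1 - p) ^ (n - wt ω.2)))
      (fun ω => (fun i => xor (ω.1 i) (ω.2 i)) = y) = 1 / 2 ^ n := by
  unfold pr
  rw [Fintype.sum_prod_type, Finset.sum_comm]
  have h : ∀ e : Fin n → Bool,
      (∑ o : Fin n → Bool, if (fun i => xor (o i) (e i)) = y then
        (1 / 2 ^ n : ℝ) * (p ^ wt e * (1 - p) ^ (n - wt e)) else 0)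
      = (1 / 2 ^ n : ℝ) * (p ^ wt e * (1 - p) ^ (n - wt e)) := by
    intro e
    simp only [xor_eq_iff]
    rw [Finset.sum_ite_eq' univ (fun i => xor (y i) (e i))]
    simp
  simp only [h]
  rw [← Finset.mul_sum, sum_wt_total, mul_one]

lemma pr_num {n : ℕ} (p : ℝ) (t : ℕ) (y o₀ : Fin n → Bool) :
    pr (fun ω : (Fin n → Bool) × (Fin n → Bool) =>
          (1 / 2 ^ n : ℝ) * (p ^ wt ω.2 * (1 - p) ^ (n - wt ω.2)))
      (fun ω => hammingDist ω.1 o₀ ≤ t ∧ (fun i => xor (ω.1 i) (ω.2 i)) = y)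
    = (1 / 2 ^ n : ℝ) *
      ∑ e ∈ (univ : Finset (Fin n → Bool)).filter
          (fun e => hammingDist e (fun i => xor (y i) (o₀ i)) ≤ t),
        p ^ wt e * (1 - p) ^ (n - wt e) := by
  unfold pr
  rw [Fintype.sum_prod_type, Finset.sum_comm]
  have h : ∀ e : Fin n → Bool,
      (∑ o : Fin n → Bool, if hammingDist o o₀ ≤ t ∧ (fun i => xor (o i) (e i)) = y then
        (1 / 2 ^ n : ℝ) * (p ^ wt e * (1 - p) ^ (n - wt e)) else 0)
      = if hammingDist e (fun i => xor (y i) (o₀ i)) ≤ t then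
          (1 / 2 ^ n : ℝ) * (p ^ wt e * (1 - p) ^ (n - wt e)) else 0 := by
    intro e
    simp only [xor_eq_iff]
    have step : ∀ o : Fin n → Bool,
        (if hammingDist o o₀ ≤ t ∧ o = (fun i => xor (y i) (e i)) then
          (1 / 2 ^ n : ℝ) * (p ^ wt e * (1 - p) ^ (n - wt e)) else 0)
        = if o = (fun i => xor (y i) (e i)) then
            (if hammingDist (fun i => xor (y i) (e i)) o₀ ≤ t then
              (1 / 2 ^ n : ℝ) * (p ^ wt e * (1 - p) ^ (n - wt e)) else 0) else 0 := by
      intro o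
      by_cases ho : o = (fun i => xor (y i) (e i))
      · subst ho; simp
      · simp [ho]
    simp only [step]
    rw [Finset.sum_ite_eq' univ (fun i => xor (y i) (e i))]
    simp [ham_shift]
  simp only [h]
  rw [Finset.sum_filter, Finset.mul_sum]
  exact Finset.sum_congr rfl fun e _ => by rw [mul_ite, mul_zero]

lemma condPr_val {n : ℕ} (p : ℝ) (t : ℕ) (y o₀ : Fin n → Bool) :
    condPr (fun ω : (Fin n → Bool) × (Fin n → Bool) =>
              (1 / 2 ^ n : ℝ) * (p ^ wt ω.2 * (1 - p) ^ (n - wt ω.2)))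
      (fun ω => hammingDist ω.1 o₀ ≤ t)
      (fun ω => (fun i => xor (ω.1 i) (ω.2 i)) = y)
    = ∑ e ∈ (univ : Finset (Fin n → Bool)).filter
          (fun e => hammingDist e (fun i => xor (y i) (o₀ i)) ≤ t),
        p ^ wt e * (1 - p) ^ (n - wt e) := by
  unfold condPr
  rw [pr_num, pr_Y]
  exact mul_div_cancel_left₀ _ (by positivity)

/-- Let `O` be uniform over `{0,1}^n`, `E` a vector of `n` independent Bernoulli(p)
bits (`0 ≤ p ≤ 1/2`) independent of `O`, and `Y = O ⊕ E`.  Then for every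
realization `y` of `Y` and every radius `t`,
`max_o Pr( d_H(O, o) ≤ t | Y = y ) = Σ_{i ≤ t} C(n,i)·p^i·(1−p)^{n−i}`, and
consequently `E_y [ max_o Pr( d_H(O, o) ≤ t | Y = y ) ]` equals the same sum.
The sample space consists of pairs `ω = (o, e)` with
`Pr(ω) = 2^{−n}·p^{wt(e)}·(1−p)^{n−wt(e)}`. -/
theorem uniform_bsc_close_guess (n : ℕ) (p : ℝ) (hp0 : 0 ≤ p) (hp : p ≤ 1 / 2) (t : ℕ) :
    (∀ y : Fin n → Bool,
      (⨆ o₀ : Fin n → Bool,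
        condPr (fun ω : (Fin n → Bool) × (Fin n → Bool) =>
                  (1 / 2 ^ n : ℝ) * (p ^ wt ω.2 * (1 - p) ^ (n - wt ω.2)))
          (fun ω => hammingDist ω.1 o₀ ≤ t)
          (fun ω => (fun i => xor (ω.1 i) (ω.2 i)) = y))
        = ∑ i ∈ Finset.range (t + 1), (n.choose i : ℝ) * p ^ i * (1 - p) ^ (n - i))
    ∧ (∑ y : Fin n → Bool,
        pr (fun ω : (Fin n → Bool) × (Fin n → Bool) =>
              (1 / 2 ^ n : ℝ) * (p ^ wt ω.2 * (1 - p) ^ (n - wt ω.2)))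
           (fun ω => (fun i => xor (ω.1 i) (ω.2 i)) = y) *
        ⨆ o₀ : Fin n → Bool,
          condPr (fun ω : (Fin n → Bool) × (Fin n → Bool) =>
                    (1 / 2 ^ n : ℝ) * (p ^ wt ω.2 * (1 - p) ^ (n - wt ω.2)))
            (fun ω => hammingDist ω.1 o₀ ≤ t)
            (fun ω => (fun i => xor (ω.1 i) (ω.2 i)) = y))
        = ∑ i ∈ Finset.range (t + 1), (n.choose i : ℝ) * p ^ i * (1 - p) ^ (n - i) := by
  classical
  set S : ℝ := ∑ i ∈ Finset.range (t + 1), (n.choose i : ℝ) * p ^ i * (1 - p) ^ (n - i) with hS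
  set v : (Fin n → Bool) → (Fin n → Bool) → ℝ := fun y o₀ =>
    condPr (fun ω : (Fin n → Bool) × (Fin n → Bool) =>
              (1 / 2 ^ n : ℝ) * (p ^ wt ω.2 * (1 - p) ^ (n - wt ω.2)))
      (fun ω => hammingDist ω.1 o₀ ≤ t)
      (fun ω => (fun i => xor (ω.1 i) (ω.2 i)) = y) with hv
  have hub : ∀ y o₀, v y o₀ ≤ S := by
    intro y o₀
    rw [hv]
    simp only
    rw [condPr_val]
    calc ∑ e ∈ (univ : Finset (Fin n → Bool)).filter
            (fun e => hammingDist e (fun i => xor (y i) (o₀ i)) ≤ t),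
          p ^ wt e * (1 - p) ^ (n - wt e)
        ≤ ∑ e ∈ (univ : Finset (Fin n → Bool)).filter (fun e => wt e ≤ t),
            p ^ wt e * (1 - p) ^ (n - wt e) := ball_le hp0 hp t _
      _ = S := sum_wt_le p t
  have hyy : ∀ y, v y y = S := by
    intro y
    rw [hv]
    simp only
    rw [condPr_val]
    have h0 : (fun i => xor (y i) (y i)) = (fun _ : Fin n => false) := by
      funext i; simp
    rw [h0]
    have h1 : ∀ e : Fin n → Bool, hammingDist e (fun _ => false) = wt e := fun _ => rfl
    simp only [h1]
    exact sum_wt_le p t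
  have key : ∀ y : Fin n → Bool, (⨆ o₀, v y o₀) = S := by
    intro y
    refine le_antisymm (ciSup_le (hub y)) ?_
    calc S = v y y := (hyy y).symm
      _ ≤ ⨆ o₀, v y o₀ := le_ciSup (Set.Finite.bddAbove (Set.finite_range _)) y
  constructor
  · exact key
  · have h2 : ∀ y : Fin n → Bool,
        pr (fun ω : (Fin n → Bool) × (Fin n → Bool) =>
              (1 / 2 ^ n : ℝ) * (p ^ wt ω.2 * (1 - p) ^ (n - wt ω.2)))
           (fun ω => (fun i => xor (ω.1 i) (ω.2 i)) = y) * (⨆ o₀, v y o₀)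
        = (1 / 2 ^ n : ℝ) * S := by
      intro y
      rw [key y, pr_Y]
    calc (∑ y : Fin n → Bool,
        pr (fun ω : (Fin n → Bool) × (Fin n → Bool) =>
              (1 / 2 ^ n : ℝ) * (p ^ wt ω.2 * (1 - p) ^ (n - wt ω.2)))
           (fun ω => (fun i => xor (ω.1 i) (ω.2 i)) = y) * (⨆ o₀, v y o₀))
        = ∑ _y : Fin n → Bool, (1 / 2 ^ n : ℝ) * S := Finset.sum_congr rfl fun y _ => h2 y
      _ = (Fintype.card (Fin n → Bool) : ℝ) * ((1 / 2 ^ n : ℝ) * S) := by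
          rw [Finset.sum_const, Finset.card_univ, nsmul_eq_mul]
      _ = S := by
          have : (Fintype.card (Fin n → Bool) : ℝ) = 2 ^ n := by
            simp [Fintype.card_fun]
          rw [this]
          field_simp
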